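/- arXiv:1111.3279 — 5 statements merged into one kernel-verified Lean document; each statement's English description precedes it below -/
import Mathlib

section
/- The graph H_q contains no cycle of length 4, i.e., any two distinct vertices have at most one common neighbor. -/
/-- The bipartite graph `H_q`: both parts are copies of `F³` (`Sum.inl` = points,
`Sum.inr` = lines), and the line `(a,b,c)₁` is adjacent to the points
`(x, a*x+b, a²*x+c)₀` for all `x ∈ F`. -/
def Hq (F : Type*) [Field F] : SimpleGraph ((F × F × F) ⊕ (F × F × F)) :=
  SimpleGraph.fromRel (fun u v =>
    match u, v with
    | Sum.inl (x, y, z), Sum.inr (a, b, c) => y = a * x + b ∧ z = a ^ 2 * x + c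
    | _, _ => False)

/-- `H_q` has no 4-cycles: any two distinct vertices have at most one common neighbour. -/
theorem stmt3 {F : Type*} [Field F] (u v : (F × F × F) ⊕ (F × F × F)) (huv : u ≠ v)
    (w₁ w₂ : (F × F × F) ⊕ (F × F × F))
    (h₁ : (Hq F).Adj u w₁) (h₂ : (Hq F).Adj v w₁)
    (h₃ : (Hq F).Adj u w₂) (h₄ : (Hq F).Adj v w₂) :
    w₁ = w₂ := by
  rcases u with ⟨x₁, y₁, z₁⟩ | ⟨a₁, b₁, c₁⟩ <;>
  rcases v with ⟨x₂, y₂, z₂⟩ | ⟨a₂, b₂, c₂⟩ <;>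
  rcases w₁ with ⟨p₁, q₁, r₁⟩ | ⟨d₁, e₁, f₁⟩ <;>
  rcases w₂ with ⟨p₂, q₂, r₂⟩ | ⟨d₂, e₂, f₂⟩ <;>
  simp only [Hq, SimpleGraph.fromRel_adj, ne_eq, Sum.inl.injEq, Sum.inr.injEq,
    Prod.mk.injEq, or_false, false_or, or_self, and_false, false_and, and_true,
    not_and, not_false_eq_true, true_and] at h₁ h₂ h₃ h₄ huv ⊢
  · -- u, v points; w₁, w₂ lines
    obtain ⟨_, H1, H2⟩ := h₁
    obtain ⟨_, H3, H4⟩ := h₂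
    obtain ⟨_, H5, H6⟩ := h₃
    obtain ⟨_, H7, H8⟩ := h₄
    by_cases hx : x₁ = x₂
    · exfalso
      subst hx
      have hy : y₁ = y₂ := by linear_combination H1 - H3
      have hz : z₁ = z₂ := by linear_combination H2 - H4
      exact huv rfl hy hz
    · have hd : d₁ = d₂ := by
        have h : d₁ * (x₁ - x₂) = d₂ * (x₁ - x₂) := by linear_combination H3 - H1 + H5 - H7
        exact mul_right_cancel₀ (sub_ne_zero.mpr hx) h
      subst hd
      have he : e₁ = e₂ := by linear_combination H5 - H1
      have hf : f₁ = f₂ := by linear_combination H6 - H2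
      exact ⟨rfl, he, hf⟩
  · -- u, v lines; w₁, w₂ points
    obtain ⟨_, H1, H2⟩ := h₁
    obtain ⟨_, H3, H4⟩ := h₂
    obtain ⟨_, H5, H6⟩ := h₃
    obtain ⟨_, H7, H8⟩ := h₄
    by_cases ha : a₁ = a₂
    · exfalso
      subst ha
      have hb : b₁ = b₂ := by linear_combination H3 - H1
      have hc : c₁ = c₂ := by linear_combination H4 - H2
      exact huv rfl hb hc
    · have hp : p₁ = p₂ := by
        have h : (a₁ - a₂) * p₁ = (a₁ - a₂) * p₂ := by linear_combination H3 - H1 + H5 - H7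
        exact mul_left_cancel₀ (sub_ne_zero.mpr ha) h
      subst hp
      have hq : q₁ = q₂ := by linear_combination H1 - H5
      have hr : r₁ = r₂ := by linear_combination H2 - H6
      exact ⟨rfl, hq, hr⟩
end

section
/- The graph H_q contains no cycle of length 6: there do not exist three distinct line-vertices (a_0,b_0,c_0)_1, (a_1,b_1,c_1)_1, (a_2,b_2,c_2)_1 and three distinct point-vertices forming a 6-cycle in H_q. -/
/-- `H_q` has no 6-cycles: there are no three distinct line-vertices and three distinct
point-vertices forming a 6-cycle. -/
theorem stmt4 {F : Type*} [Field F] (l₀ l₁ l₂ p₀ p₁ p₂ : F × F × F)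
    (hl₀₁ : l₀ ≠ l₁) (hl₀₂ : l₀ ≠ l₂) (hl₁₂ : l₁ ≠ l₂)
    (hp₀₁ : p₀ ≠ p₁) (hp₀₂ : p₀ ≠ p₂) (hp₁₂ : p₁ ≠ p₂) :
    ¬ ((Hq F).Adj (Sum.inr l₀) (Sum.inl p₀) ∧ (Hq F).Adj (Sum.inl p₀) (Sum.inr l₁) ∧
       (Hq F).Adj (Sum.inr l₁) (Sum.inl p₁) ∧ (Hq F).Adj (Sum.inl p₁) (Sum.inr l₂) ∧
       (Hq F).Adj (Sum.inr l₂) (Sum.inl p₂) ∧ (Hq F).Adj (Sum.inl p₂) (Sum.inr l₀)) := by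
  obtain ⟨a₀, b₀, c₀⟩ := l₀
  obtain ⟨a₁, b₁, c₁⟩ := l₁
  obtain ⟨a₂, b₂, c₂⟩ := l₂
  obtain ⟨x₀, y₀, z₀⟩ := p₀
  obtain ⟨x₁, y₁, z₁⟩ := p₁
  obtain ⟨x₂, y₂, z₂⟩ := p₂
  simp only [Hq, SimpleGraph.fromRel_adj] at *
  rintro ⟨⟨-, h0⟩, ⟨-, h1⟩, ⟨-, h2⟩, ⟨-, h3⟩, ⟨-, h4⟩, ⟨-, h5⟩⟩
  simp only [or_false, false_or] at h0 h1 h2 h3 h4 h5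
  obtain ⟨e1, e2⟩ := h0
  obtain ⟨e3, e4⟩ := h1
  obtain ⟨e5, e6⟩ := h2
  obtain ⟨e7, e8⟩ := h3
  obtain ⟨e9, e10⟩ := h4
  obtain ⟨e11, e12⟩ := h5
  -- distinct slopes
  have ha01 : a₀ ≠ a₁ := by
    rintro rfl
    apply hl₀₁
    simp only [Prod.mk.injEq, true_and]
    exact ⟨by linear_combination e3 - e1, by linear_combination e4 - e2⟩
  have ha12 : a₁ ≠ a₂ := by
    rintro rfl
    apply hl₁₂
    simp only [Prod.mk.injEq, true_and]
    exact ⟨by linear_combination e7 - e5, by linear_combination e8 - e6⟩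
  -- key: x₀ = x₁
  have key : (a₀ - a₁) * (a₁ - a₂) * (x₀ - x₁) = 0 := by
    linear_combination (e4 - e2) + (e8 - e6) + (e12 - e10)
      - (a₂ + a₀) * ((e3 - e1) + (e7 - e5) + (e11 - e9))
  have hx : x₀ = x₁ := by
    rcases mul_eq_zero.1 key with h | h
    · rcases mul_eq_zero.1 h with h | h
      · exact absurd (sub_eq_zero.1 h) ha01
      · exact absurd (sub_eq_zero.1 h) ha12
    · exact sub_eq_zero.1 h
  subst hx
  apply hp₀₁
  simp only [Prod.mk.injEq, true_and]
  exact ⟨by linear_combination e3 - e5, by linear_combination e4 - e6⟩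
end

section
/- For q ≥ 3 a prime power, the graph H_q is a q-regular bipartite graph of girth exactly 8 on 2q^3 vertices. -/
section aux
variable {F : Type*} [Field F]

lemma Hq_adj_lr (x y z a b c : F) :
    (Hq F).Adj (Sum.inl (x,y,z)) (Sum.inr (a,b,c)) ↔ (y = a*x+b ∧ z = a^2*x+c) := by
  simp [Hq, SimpleGraph.fromRel_adj]

lemma Hq_adj_rl (a b c x y z : F) :
    (Hq F).Adj (Sum.inr (a,b,c)) (Sum.inl (x,y,z)) ↔ (y = a*x+b ∧ z = a^2*x+c) := by
  rw [SimpleGraph.adj_comm]; exact Hq_adj_lr x y z a b c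

lemma Hq_adj_ll (p q : F×F×F) : (Hq F).Adj (Sum.inl p) (Sum.inl q) ↔ False := by
  obtain ⟨x,y,z⟩ := p; obtain ⟨a,b,c⟩ := q
  simp [Hq, SimpleGraph.fromRel_adj]

lemma Hq_adj_rr (p q : F×F×F) : (Hq F).Adj (Sum.inr p) (Sum.inr q) ↔ False := by
  obtain ⟨x,y,z⟩ := p; obtain ⟨a,b,c⟩ := q
  simp [Hq, SimpleGraph.fromRel_adj]

lemma Hq_adj_side {u v : (F×F×F) ⊕ (F×F×F)} (h : (Hq F).Adj u v) :
    u.isLeft = !v.isLeft := by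
  obtain (p|p) := u <;> obtain (q|q) := v
  · exact absurd h (by rw [Hq_adj_ll]; exact id)
  · rfl
  · rfl
  · exact absurd h (by rw [Hq_adj_rr]; exact id)

lemma Hq_walk_parity {u v : (F×F×F) ⊕ (F×F×F)} (w : (Hq F).Walk u v) :
    Even w.length ↔ u.isLeft = v.isLeft := by
  induction w with
  | nil => simp
  | @cons u m v h p ih =>
    rw [SimpleGraph.Walk.length_cons, Nat.even_add_one, ih, Hq_adj_side h]
    cases hm : m.isLeft <;> cases hv : v.isLeft <;> simp

lemma core4 (a1 b1 c1 a2 b2 c2 x1 y1 z1 x2 y2 z2 : F)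
    (e1a : y1 = a1*x1+b1) (e1b : z1 = a1^2*x1+c1)
    (e2a : y1 = a2*x1+b2) (e2b : z1 = a2^2*x1+c2)
    (e3a : y2 = a2*x2+b2) (e3b : z2 = a2^2*x2+c2)
    (e4a : y2 = a1*x2+b1) (e4b : z2 = a1^2*x2+c1)
    (hl : ¬(a1 = a2 ∧ b1 = b2 ∧ c1 = c2))
    (hp : ¬(x1 = x2 ∧ y1 = y2 ∧ z1 = z2)) : False := by
  have ha : a1 ≠ a2 := by
    intro h
    exact hl ⟨h, by linear_combination e2a - e1a - x1*h,
      by linear_combination e2b - e1b - (a1+a2)*x1*h⟩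
  have key : (a1 - a2) * (x1 - x2) = 0 := by
    linear_combination e2a - e1a + e4a - e3a
  have hx : x1 = x2 := by
    exact sub_eq_zero.mp ((mul_eq_zero.mp key).resolve_left (sub_ne_zero.mpr ha))
  exact hp ⟨hx, by linear_combination e1a - e4a + a1*hx, by linear_combination e1b - e4b + a1^2*hx⟩

lemma core6 (a1 b1 c1 a2 b2 c2 a3 b3 c3 x1 y1 z1 x2 y2 z2 x3 y3 z3 : F)
    (e1a : y1 = a1*x1+b1) (e1b : z1 = a1^2*x1+c1)
    (e2a : y1 = a2*x1+b2) (e2b : z1 = a2^2*x1+c2)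
    (e3a : y2 = a2*x2+b2) (e3b : z2 = a2^2*x2+c2)
    (e4a : y2 = a3*x2+b3) (e4b : z2 = a3^2*x2+c3)
    (e5a : y3 = a3*x3+b3) (e5b : z3 = a3^2*x3+c3)
    (e6a : y3 = a1*x3+b1) (e6b : z3 = a1^2*x3+c1)
    (hl12 : ¬(a1 = a2 ∧ b1 = b2 ∧ c1 = c2))
    (hl23 : ¬(a2 = a3 ∧ b2 = b3 ∧ c2 = c3))
    (hl13 : ¬(a1 = a3 ∧ b1 = b3 ∧ c1 = c3))
    (hp23 : ¬(x2 = x3 ∧ y2 = y3 ∧ z2 = z3)) : False := by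
  have ha12 : a1 ≠ a2 := by
    intro h
    exact hl12 ⟨h, by linear_combination e2a - e1a - x1*h,
      by linear_combination e2b - e1b - (a1+a2)*x1*h⟩
  have ha23 : a2 ≠ a3 := by
    intro h
    exact hl23 ⟨h, by linear_combination e4a - e3a - x2*h,
      by linear_combination e4b - e3b - (a2+a3)*x2*h⟩
  have ha13 : a1 ≠ a3 := by
    intro h
    exact hl13 ⟨h, by linear_combination e5a - e6a - x3*h,
      by linear_combination e5b - e6b - (a1+a3)*x3*h⟩
  have key : (a3 - a1) * (a2 - a3) * (x2 - x3) = 0 := by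
    linear_combination (a1+a2)*(e1a - e2a + e3a - e4a + e5a - e6a)
      - (e1b - e2b + e3b - e4b + e5b - e6b)
  have hx : x2 = x3 := by
    have h1 : a3 - a1 ≠ 0 := sub_ne_zero.mpr (Ne.symm ha13)
    have h2 : a2 - a3 ≠ 0 := sub_ne_zero.mpr ha23
    exact sub_eq_zero.mp ((mul_eq_zero.mp key).resolve_left (mul_ne_zero h1 h2))
  exact hp23 ⟨hx, by linear_combination e4a - e5a + a3*hx,
    by linear_combination e4b - e5b + a3^2*hx⟩

lemma Hq_no4 (v : (F×F×F) ⊕ (F×F×F)) (w : (Hq F).Walk v v) (hc : w.IsCycle) :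
    w.length ≠ 4 := by
  intro hlen
  obtain ⟨-, -, hnd⟩ := (SimpleGraph.Walk.isCycle_def _).mp hc
  cases w with
  | nil => simp at hlen
  | cons h1 p1 =>
  cases p1 with
  | nil => simp at hlen
  | cons h2 p2 =>
  cases p2 with
  | nil => simp at hlen
  | cons h3 p3 =>
  cases p3 with
  | nil => simp at hlen
  | cons h4 p4 =>
  cases p4 with
  | cons h5 p5 => simp [SimpleGraph.Walk.length_cons] at hlen
  | nil =>
  clear hlen hc
  simp only [SimpleGraph.Walk.support_cons, SimpleGraph.Walk.support_nil,
    List.tail_cons, List.nodup_cons, List.mem_cons, List.mem_singleton,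
    List.not_mem_nil, or_false, List.nodup_nil, and_true] at hnd
  rename_i u1 u2 u3
  obtain (⟨vx,vy,vz⟩|⟨vx,vy,vz⟩) := v <;>
    obtain (⟨x1,y1,z1⟩|⟨x1,y1,z1⟩) := u1 <;>
    obtain (⟨x2,y2,z2⟩|⟨x2,y2,z2⟩) := u2 <;>
    obtain (⟨x3,y3,z3⟩|⟨x3,y3,z3⟩) := u3 <;>
    simp only [Hq_adj_lr, Hq_adj_rl, Hq_adj_ll, Hq_adj_rr] at h1 h2 h3 h4 <;>
    simp only [Sum.inl.injEq, Sum.inr.injEq, Prod.mk.injEq, not_or, reduceCtorEq,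
      not_false_eq_true, true_and, and_true] at hnd
  · exact core4 x1 y1 z1 x3 y3 z3 vx vy vz x2 y2 z2 h1.1 h1.2 h4.1 h4.2 h3.1 h3.2 h2.1 h2.2
      hnd.1 (fun h => hnd.2 ⟨h.1.symm, h.2.1.symm, h.2.2.symm⟩)
  · exact core4 vx vy vz x2 y2 z2 x1 y1 z1 x3 y3 z3 h1.1 h1.2 h2.1 h2.2 h3.1 h3.2 h4.1 h4.2
      (fun h => hnd.2 ⟨h.1.symm, h.2.1.symm, h.2.2.symm⟩) hnd.1

lemma Hq_no6 (v : (F×F×F) ⊕ (F×F×F)) (w : (Hq F).Walk v v) (hc : w.IsCycle) :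
    w.length ≠ 6 := by
  intro hlen
  obtain ⟨-, -, hnd⟩ := (SimpleGraph.Walk.isCycle_def _).mp hc
  cases w with
  | nil => simp at hlen
  | cons h1 p1 =>
  cases p1 with
  | nil => simp at hlen
  | cons h2 p2 =>
  cases p2 with
  | nil => simp at hlen
  | cons h3 p3 =>
  cases p3 with
  | nil => simp at hlen
  | cons h4 p4 =>
  cases p4 with
  | nil => simp at hlen
  | cons h5 p5 =>
  cases p5 with
  | nil => simp at hlen
  | cons h6 p6 =>
  cases p6 with
  | cons h7 p7 => simp [SimpleGraph.Walk.length_cons] at hlen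
  | nil =>
  clear hlen hc
  simp only [SimpleGraph.Walk.support_cons, SimpleGraph.Walk.support_nil,
    List.tail_cons, List.nodup_cons, List.mem_cons, List.mem_singleton,
    List.not_mem_nil, or_false, List.nodup_nil, and_true] at hnd
  rename_i u1 u2 u3 u4 u5
  obtain (⟨vx,vy,vz⟩|⟨vx,vy,vz⟩) := v <;>
    obtain (⟨x1,y1,z1⟩|⟨x1,y1,z1⟩) := u1 <;>
    obtain (⟨x2,y2,z2⟩|⟨x2,y2,z2⟩) := u2 <;>
    obtain (⟨x3,y3,z3⟩|⟨x3,y3,z3⟩) := u3 <;>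
    obtain (⟨x4,y4,z4⟩|⟨x4,y4,z4⟩) := u4 <;>
    obtain (⟨x5,y5,z5⟩|⟨x5,y5,z5⟩) := u5 <;>
    simp only [Hq_adj_lr, Hq_adj_rl, Hq_adj_ll, Hq_adj_rr] at h1 h2 h3 h4 h5 h6 <;>
    simp only [Sum.inl.injEq, Sum.inr.injEq, Prod.mk.injEq, not_or, reduceCtorEq,
      not_false_eq_true, true_and, and_true] at hnd
  · exact core6 x1 y1 z1 x3 y3 z3 x5 y5 z5 x2 y2 z2 x4 y4 z4 vx vy vz
      h2.1 h2.2 h3.1 h3.2 h4.1 h4.2 h5.1 h5.2 h6.1 h6.2 h1.1 h1.2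
      hnd.1.1 hnd.2.2.1 hnd.1.2 hnd.2.2.2
  · exact core6 vx vy vz x2 y2 z2 x4 y4 z4 x1 y1 z1 x3 y3 z3 x5 y5 z5
      h1.1 h1.2 h2.1 h2.2 h3.1 h3.2 h4.1 h4.2 h5.1 h5.2 h6.1 h6.2
      (fun h => hnd.2.1.2 ⟨h.1.symm, h.2.1.symm, h.2.2.symm⟩) hnd.2.1.1
      (fun h => hnd.2.2.2 ⟨h.1.symm, h.2.1.symm, h.2.2.symm⟩) hnd.2.2.1

lemma Hq_reg [Fintype F] (v : (F × F × F) ⊕ (F × F × F)) :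
    ((Hq F).neighborSet v).ncard = Fintype.card F := by
  have key : ∃ f : F → (F × F × F) ⊕ (F × F × F), Function.Injective f ∧
      (Hq F).neighborSet v = Set.range f := by
    obtain (⟨x,y,z⟩|⟨a,b,c⟩) := v
    · refine ⟨fun a => Sum.inr (a, y - a*x, z - a^2*x), ?_, ?_⟩
      · intro a a' h
        simpa using congrArg (fun s => Sum.elim (fun p => p.1) (fun p => p.1) s) h
      · ext u
        obtain (⟨x',y',z'⟩|⟨a,b,c⟩) := u
        · simp [SimpleGraph.neighborSet, Hq_adj_ll]
        · simp only [SimpleGraph.mem_neighborSet, SimpleGraph.adj_comm, Hq_adj_lr,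
            Set.mem_range, Sum.inr.injEq, Prod.mk.injEq, exists_eq_left]
          constructor
          · rintro ⟨h1, h2⟩
            exact ⟨by linear_combination h1, by linear_combination h2⟩
          · rintro ⟨h1, h2⟩
            exact ⟨by linear_combination h1, by linear_combination h2⟩
    · refine ⟨fun x => Sum.inl (x, a*x+b, a^2*x+c), ?_, ?_⟩
      · intro t t' h
        simpa using congrArg (fun s => Sum.elim (fun p => p.1) (fun p => p.1) s) h
      · ext u
        obtain (⟨x,y,z⟩|⟨a',b',c'⟩) := u
        · simp only [SimpleGraph.mem_neighborSet, Hq_adj_rl, Set.mem_range,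
            Sum.inl.injEq, Prod.mk.injEq]
          constructor
          · rintro ⟨h1, h2⟩
            exact ⟨x, rfl, h1.symm, h2.symm⟩
          · rintro ⟨t, rfl, h1, h2⟩
            exact ⟨h1.symm, h2.symm⟩
        · simp [SimpleGraph.neighborSet, Hq_adj_rr]
  obtain ⟨f, hinj, hset⟩ := key
  rw [hset, ← Set.image_univ, Set.ncard_image_of_injective _ hinj, Set.ncard_univ,
    Nat.card_eq_fintype_card]

lemma Hq_egirth : (Hq F).egirth = 8 := by
  have h1 : (Hq F).Adj (Sum.inr (0,0,0)) (Sum.inl ((0:F),(0:F),(0:F))) :=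
    (Hq_adj_rl _ _ _ _ _ _).mpr ⟨by ring, by ring⟩
  have h2 : (Hq F).Adj (Sum.inl ((0:F),(0:F),(0:F))) (Sum.inr (1,0,0)) :=
    (Hq_adj_lr _ _ _ _ _ _).mpr ⟨by ring, by ring⟩
  have h3 : (Hq F).Adj (Sum.inr ((1:F),(0:F),(0:F))) (Sum.inl (1,1,1)) :=
    (Hq_adj_rl _ _ _ _ _ _).mpr ⟨by ring, by ring⟩
  have h4 : (Hq F).Adj (Sum.inl ((1:F),(1:F),(1:F))) (Sum.inr (0,1,1)) :=
    (Hq_adj_lr _ _ _ _ _ _).mpr ⟨by ring, by ring⟩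
  have h5 : (Hq F).Adj (Sum.inr ((0:F),(1:F),(1:F))) (Sum.inl (0,1,1)) :=
    (Hq_adj_rl _ _ _ _ _ _).mpr ⟨by ring, by ring⟩
  have h6 : (Hq F).Adj (Sum.inl ((0:F),(1:F),(1:F))) (Sum.inr (1,1,1)) :=
    (Hq_adj_lr _ _ _ _ _ _).mpr ⟨by ring, by ring⟩
  have h7 : (Hq F).Adj (Sum.inr ((1:F),(1:F),(1:F))) (Sum.inl (-1,0,0)) :=
    (Hq_adj_rl _ _ _ _ _ _).mpr ⟨by ring, by ring⟩
  have h8 : (Hq F).Adj (Sum.inl ((-1:F),(0:F),(0:F))) (Sum.inr (0,0,0)) :=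
    (Hq_adj_lr _ _ _ _ _ _).mpr ⟨by ring, by ring⟩
  let w8 : (Hq F).Walk (Sum.inr (0,0,0)) (Sum.inr (0,0,0)) :=
    .cons h1 (.cons h2 (.cons h3 (.cons h4 (.cons h5 (.cons h6 (.cons h7 (.cons h8 .nil)))))))
  have hcyc : w8.IsCycle := by
    rw [SimpleGraph.Walk.isCycle_def]
    refine ⟨⟨?_⟩, by simp [w8], ?_⟩
    · show w8.edges.Nodup
      simp [w8, SimpleGraph.Walk.edges, SimpleGraph.Walk.darts, Prod.ext_iff]
    · show w8.support.tail.Nodup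
      simp [w8, SimpleGraph.Walk.support, Prod.ext_iff]
  refine le_antisymm ?_ ?_
  · have hle : (Hq F).egirth ≤ (w8.length : ℕ∞) := by
      rw [SimpleGraph.egirth]
      exact iInf₂_le_of_le _ w8 (iInf_le _ hcyc)
    simpa [w8] using hle
  · rw [SimpleGraph.le_egirth]
    intro a w hw
    have h3l := hw.three_le_length
    have heven : Even w.length := (Hq_walk_parity w).mpr rfl
    have hn4 := Hq_no4 a w hw
    have hn6 := Hq_no6 a w hw
    obtain ⟨k, hk⟩ := heven
    have : 8 ≤ w.length := by omega
    exact_mod_cast this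

end aux

/-- For `q ≥ 3`, the graph `H_q` is a `q`-regular bipartite graph of girth exactly 8
on `2q³` vertices. -/
theorem stmt6 {F : Type*} [Field F] [Fintype F] (hq : 3 ≤ Fintype.card F) :
    (∀ v : (F × F × F) ⊕ (F × F × F),
        ((Hq F).neighborSet v).ncard = Fintype.card F) ∧
    (Hq F).egirth = 8 ∧
    Fintype.card ((F × F × F) ⊕ (F × F × F)) = 2 * Fintype.card F ^ 3 := by
  refine ⟨Hq_reg, Hq_egirth, ?_⟩
  simp [Fintype.card_sum, Fintype.card_prod]
  ring
end

section
/- The map σ defined by σ((a,b,c)_1) = (a, b, 2ab + c)_1 and σ((x,y,z)_0) = (x,y,z)_0 is a graph isomorphism from B_q to H_q. -/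
/-- The bipartite graph `B_q` (`Sum.inl` = points, `Sum.inr` = lines):
the line `(a,b,c)₁` is adjacent to the points `(j, a*j+b, a²*j+2ab+c)₀` for all `j ∈ F`. -/
def Bq (F : Type*) [Field F] : SimpleGraph ((F × F × F) ⊕ (F × F × F)) :=
  SimpleGraph.fromRel (fun u v =>
    match u, v with
    | Sum.inl (j, y, z), Sum.inr (a, b, c) =>
        y = a * j + b ∧ z = a ^ 2 * j + 2 * a * b + c
    | _, _ => False)

/-- The map `σ`, fixing points and sending the line `(a,b,c)₁` to `(a,b,2ab+c)₁`. -/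
def sigmaMap (F : Type*) [Field F] :
    (F × F × F) ⊕ (F × F × F) → (F × F × F) ⊕ (F × F × F)
  | Sum.inl p => Sum.inl p
  | Sum.inr (a, b, c) => Sum.inr (a, b, 2 * a * b + c)

/-- `σ` is a graph isomorphism from `B_q` to `H_q`. -/
theorem stmt7 {F : Type*} [Field F] :
    Function.Bijective (sigmaMap F) ∧
    ∀ u v : (F × F × F) ⊕ (F × F × F),
      (Bq F).Adj u v ↔ (Hq F).Adj (sigmaMap F u) (sigmaMap F v) := by
  constructor
  · apply Function.bijective_iff_has_inverse.2
    refine ⟨fun u => match u with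
      | Sum.inl p => Sum.inl p
      | Sum.inr (a, b, c) => Sum.inr (a, b, -(2 * a * b) + c), ?_, ?_⟩
    · rintro (⟨x, y, z⟩ | ⟨a, b, c⟩) <;> simp [sigmaMap]
    · rintro (⟨x, y, z⟩ | ⟨a, b, c⟩) <;> simp [sigmaMap]
  · rintro (⟨x, y, z⟩ | ⟨a, b, c⟩) (⟨x', y', z'⟩ | ⟨a', b', c'⟩) <;>
      simp [Bq, Hq, sigmaMap, SimpleGraph.fromRel_adj, Prod.ext_iff]
    · exact fun _ => by rw [add_assoc]
    · exact fun _ => by rw [add_assoc]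
end

section
/- In the graph B_q, for all x,y in F_q, any two distinct vertices in the set {(x,y,j)_0 : j in F_q} are at distance at least 6: they have no common neighbor, and there is no path of length 4 between them. -/
/-- In `B_q`, two distinct points `(x,y,j)₀` and `(x,y,j')₀` are at distance at least 6:
they have no common neighbour and there is no path (walk) of length 4 between them. -/
theorem stmt8 {F : Type*} [Field F] (x y j j' : F) (h : j ≠ j') :
    (∀ w, ¬ ((Bq F).Adj (Sum.inl (x, y, j)) w ∧ (Bq F).Adj (Sum.inl (x, y, j')) w)) ∧
    ¬ ∃ w₁ w₂ w₃, (Bq F).Adj (Sum.inl (x, y, j)) w₁ ∧ (Bq F).Adj w₁ w₂ ∧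
        (Bq F).Adj w₂ w₃ ∧ (Bq F).Adj w₃ (Sum.inl (x, y, j')) := by
  constructor
  · rintro (⟨a, b, c⟩ | ⟨a, b, c⟩) ⟨h1, h2⟩ <;>
      simp [Bq, SimpleGraph.fromRel_adj] at h1 h2
    exact h (h1.2.trans h2.2.symm)
  · rintro ⟨(⟨a, b, c⟩ | ⟨a, b, c⟩), w2, w3, h1, h2, h3, h4⟩ <;>
      simp [Bq, SimpleGraph.fromRel_adj] at h1
    obtain (⟨x2, y2, z2⟩ | w2) := w2
    · obtain (w3 | ⟨a', b', c'⟩) := w3 <;>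
        simp [Bq, SimpleGraph.fromRel_adj] at h2 h3 h4
      obtain ⟨e1, e2⟩ := h1
      obtain ⟨e3, e4⟩ := h2
      obtain ⟨e5, e6⟩ := h3
      obtain ⟨e7, e8⟩ := h4
      apply h
      by_cases hx : x = x2
      · subst hx
        exact (e2.trans e4.symm).trans (e8.trans e6.symm).symm
      · have ha : a = a' := mul_right_cancel₀ (sub_ne_zero.mpr hx)
          (by linear_combination e3 - e1 + e7 - e5 : a * (x - x2) = a' * (x - x2))
        subst ha
        linear_combination e2 - e4 + e6 - e8
    · simp [Bq, SimpleGraph.fromRel_adj] at h2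
end
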